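/- arXiv:1006.4044 — 2 statements merged into one kernel-verified Lean document; each statement's English description precedes it below -/
import Mathlib

section
/- Let A be a unital C*-algebra, let π : A → B(H) be a representation with cyclic vector Ξ, let φ(a) = ⟨Ξ, π(a)Ξ⟩ be the associated vector functional, and let ε : A → ℂ be a character. Suppose there exists c > 0 such that φ(a*a) ≥ c·|ε(a)|² for all a ∈ A (i.e. φ − c·ε is a positive functional). Then there exists a unit vector v ∈ H such that π(a)v = ε(a)v for all a ∈ A. -/
open scoped InnerProductSpace ComplexOrder

/-!
The vector state dominates `c • ε`, so `|ε a| ≤ c^{-1/2} ‖π a Ξ‖`. Hence `π a Ξ ↦ ε a` is a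
well-defined bounded functional on the dense subspace `π(A)Ξ`; extending it (Hahn–Banach) and
representing it (Riesz) gives `w` with `⟪w, π a Ξ⟫ = ε a`. Then
`⟪π b w, π a Ξ⟫ = ε (star b * a) = ⟪ε b • w, π a Ξ⟫`, so `w` is an `ε`-eigenvector by density,
and `⟪w, Ξ⟫ = ε 1 = 1` shows `w ≠ 0`.
-/

theorem LinearMap.exists_strongDual_comp_eq_of_norm_le {𝕜 E F : Type*} [RCLike 𝕜]
    [AddCommGroup E] [Module 𝕜 E] [SeminormedAddCommGroup F] [NormedSpace 𝕜 F]
    (T : E →ₗ[𝕜] F) (f : E →ₗ[𝕜] 𝕜) (C : ℝ) (hf : ∀ x, ‖f x‖ ≤ C * ‖T x‖) :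
    ∃ g : StrongDual 𝕜 F, ∀ x, g (T x) = f x := by
  have hker : LinearMap.ker T ≤ LinearMap.ker f := fun x hx ↦ by
    simpa [show T x = 0 from hx] using hf x
  let f₀ : LinearMap.range T →ₗ[𝕜] 𝕜 :=
    (LinearMap.ker T).liftQ f hker ∘ₗ (T.quotKerEquivRange).symm.toLinearMap
  have hf₀ : ∀ x, f₀ ⟨T x, LinearMap.mem_range_self T x⟩ = f x := fun x ↦ by
    simp [f₀, LinearMap.quotKerEquivRange_symm_apply_image]
  have hbound : ∀ y, ‖f₀ y‖ ≤ C * ‖y‖ := by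
    rintro ⟨_, x, rfl⟩
    simpa [hf₀] using hf x
  obtain ⟨g, hg, -⟩ := exists_extension_norm_eq _ (f₀.mkContinuous C hbound)
  exact ⟨g, fun x ↦ (hg _).trans (hf₀ x)⟩

section Representation

variable {𝕜 A H : Type*} [RCLike 𝕜] [Semiring A] [StarRing A] [Algebra 𝕜 A]
  [NormedAddCommGroup H] [InnerProductSpace 𝕜 H] [CompleteSpace H]

theorem StarAlgHom.inner_map_star_mul_self_apply (π : A →⋆ₐ[𝕜] (H →L[𝕜] H)) (a : A) (x : H) :
    ⟪x, π (star a * a) x⟫_𝕜 = (‖π a x‖ ^ 2 : 𝕜) := by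
  rw [map_mul, map_star, ContinuousLinearMap.star_eq_adjoint, mul_apply_eq_comp,
    ContinuousLinearMap.adjoint_inner_right, inner_self_eq_norm_sq_to_K]

theorem StarAlgHom.apply_eq_smul_of_inner_eq (π : A →⋆ₐ[𝕜] (H →L[𝕜] H)) (ε : A →⋆ₐ[𝕜] 𝕜)
    {Ξ : H} (hcyc : Dense (Set.range fun a : A => π a Ξ)) {w : H}
    (hw : ∀ a, ⟪w, π a Ξ⟫_𝕜 = ε a) (b : A) : π b w = ε b • w := by
  refine ext_inner_right 𝕜 (congrFun ((continuous_const.inner continuous_id).ext_on hcyc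
    (continuous_const.inner continuous_id) ?_))
  rintro _ ⟨a, rfl⟩
  calc ⟪π b w, π a Ξ⟫_𝕜 = ⟪w, π (star b * a) Ξ⟫_𝕜 := by
        rw [map_mul, map_star, ContinuousLinearMap.star_eq_adjoint, mul_apply_eq_comp,
          ContinuousLinearMap.adjoint_inner_right]
    _ = ⟪ε b • w, π a Ξ⟫_𝕜 := by rw [hw, inner_smul_left, hw, map_mul, map_star]; rfl

end Representation

theorem stmt_8_general {A : Type*} [NormedRing A] [StarRing A]
    [NormedAlgebra ℂ A]
    {H : Type*} [NormedAddCommGroup H] [InnerProductSpace ℂ H] [CompleteSpace H]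
    (π : A →⋆ₐ[ℂ] (H →L[ℂ] H)) (Ξ : H)
    (hcyc : Dense (Set.range fun a : A => π a Ξ))
    (φ : A → ℂ) (hφ : ∀ a : A, φ a = ⟪Ξ, π a Ξ⟫_ℂ)
    (ε : A →⋆ₐ[ℂ] ℂ) (c : ℝ) (hc : 0 < c)
    (hdom : ∀ a : A, (c * ‖ε a‖ ^ 2 : ℂ) ≤ φ (star a * a)) :
    ∃ v : H, ‖v‖ = 1 ∧ ∀ a : A, π a v = ε a • v := by
  have hbound : ∀ a, ‖ε a‖ ≤ (√c)⁻¹ * ‖π a Ξ‖ := fun a ↦ by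
    have h : c * ‖ε a‖ ^ 2 ≤ ‖π a Ξ‖ ^ 2 := by
      rw [← Complex.real_le_real]
      push_cast
      have hdom_a := hdom a
      rwa [hφ, π.inner_map_star_mul_self_apply] at hdom_a
    rw [← div_eq_inv_mul, le_div_iff₀ (Real.sqrt_pos.2 hc)]
    refine le_of_sq_le_sq ?_ (norm_nonneg _)
    rwa [mul_pow, Real.sq_sqrt hc.le, mul_comm]
  let T : A →ₗ[ℂ] H := (ContinuousLinearMap.apply ℂ H Ξ).toLinearMap ∘ₗ π.toAlgHom.toLinearMap
  obtain ⟨g, hg⟩ := T.exists_strongDual_comp_eq_of_norm_le ε.toAlgHom.toLinearMap _ hbound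
  let w := (InnerProductSpace.toDual ℂ H).symm g
  have hw : ∀ a, ⟪w, π a Ξ⟫_ℂ = ε a := fun a ↦ InnerProductSpace.toDual_symm_apply.trans (hg a)
  have hw₀ : w ≠ 0 := by
    rintro h
    simpa [h] using hw 1
  refine ⟨(‖w‖ : ℂ)⁻¹ • w, norm_smul_inv_norm hw₀, fun a ↦ ?_⟩
  rw [map_smul, π.apply_eq_smul_of_inner_eq ε hcyc hw, smul_comm]

/-- Let `A` be a unital C*-algebra, `π : A → B(H)` a representation with
cyclic vector `Ξ`, `φ(a) = ⟪Ξ, π(a)Ξ⟫` the associated vector functional, and `ε : A → ℂ`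
a character. If there is `c > 0` with `φ(a*a) ≥ c·|ε(a)|²` for all `a` (i.e. `φ − c·ε` is
positive), then there is a unit vector `v ∈ H` with `π(a)v = ε(a)v` for all `a`. -/
theorem stmt_8 {A : Type*} [NormedRing A] [StarRing A] [CStarRing A]
    [NormedAlgebra ℂ A] [StarModule ℂ A] [CompleteSpace A]
    {H : Type*} [NormedAddCommGroup H] [InnerProductSpace ℂ H] [CompleteSpace H]
    (π : A →⋆ₐ[ℂ] (H →L[ℂ] H)) (Ξ : H)
    (hcyc : Dense (Set.range fun a : A => π a Ξ))
    (φ : A → ℂ) (hφ : ∀ a : A, φ a = ⟪Ξ, π a Ξ⟫_ℂ)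
    (ε : A →⋆ₐ[ℂ] ℂ) (c : ℝ) (hc : 0 < c)
    (hdom : ∀ a : A, (c * ‖ε a‖ ^ 2 : ℂ) ≤ φ (star a * a)) :
    ∃ v : H, ‖v‖ = 1 ∧ ∀ a : A, π a v = ε a • v :=
  stmt_8_general π Ξ hcyc φ hφ ε c hc hdom
end

section
/- Let A be a unital complex *-algebra, H a complex Hilbert space, π : A → B(H) a unital *-homomorphism, and ε : A → ℂ a unital *-homomorphism (character). Assume ε is unbounded with respect to the seminorm a ↦ ‖π(a)‖, i.e. there is no constant C ≥ 0 with |ε(a)| ≤ C‖π(a)‖ for all a ∈ A. Let H̃ = H ⊕ ℂ be the Hilbert space direct sum, and define the representation π̃ : A → B(H̃) by π̃(a)(ξ, z) = (π(a)ξ, ε(a)z). Then: (1) the orthogonal projection P of H̃ onto the summand {0} ⊕ ℂ belongs to the norm closure of π̃(A) in B(H̃); and (2) the norm closure of π̃(A) equals { b ⊕ z·1 : b in the norm closure of π(A), z ∈ ℂ }, so the closure of π̃(A) is *-isomorphic to the direct sum of ℂP and the norm closure of π(A). -/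
/-!
Unboundedness of `ε` gives elements `b` with `ε b = 1` and `‖π b‖` arbitrarily small, so `(0, 1)`
lies in the closure of `{(π a, ε a)}` in `B(H) × ℂ`. That closure is a closed subspace, hence it
contains `closure (π A) × ℂ`, and so equals it. The map `(b, z) ↦ b ⊕ z • 1` is a closed embedding
of `B(H) × ℂ` into `B(H ⊕ ℂ)` and carries this closure onto the closure of `π̃ A`.
-/

open Set Topology

section Unbounded

variable {𝕜 A V : Type*} [NormedField 𝕜] [AddCommGroup A] [Module 𝕜 A]
  [NormedAddCommGroup V] [NormedSpace 𝕜 V] (f : A →ₗ[𝕜] V) (g : A →ₗ[𝕜] 𝕜)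

theorem zero_one_mem_closure_range_prod_of_unbounded
    (hg : ¬ ∃ C : ℝ, 0 ≤ C ∧ ∀ a, ‖g a‖ ≤ C * ‖f a‖) :
    ((0 : V), (1 : 𝕜)) ∈ closure (range fun a => (f a, g a)) := by
  refine Metric.mem_closure_iff.2 fun δ hδ => ?_
  push Not at hg
  obtain ⟨a, ha⟩ := hg δ⁻¹ (inv_nonneg.2 hδ.le)
  have hga : g a ≠ 0 := by
    rintro h
    rw [h, norm_zero] at ha
    exact ha.not_ge (by positivity)
  refine ⟨_, ⟨(g a)⁻¹ • a, rfl⟩, ?_⟩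
  have hfa : ‖(g a)⁻¹ • f a‖ < δ := by
    rw [norm_smul, norm_inv, inv_mul_lt_iff₀ (norm_pos_iff.2 hga), mul_comm ‖g a‖]
    calc ‖f a‖ = δ * (δ⁻¹ * ‖f a‖) := by field_simp
      _ < δ * ‖g a‖ := mul_lt_mul_of_pos_left ha hδ
  simpa [dist_eq_norm, inv_mul_cancel₀ hga] using hfa

theorem closure_range_prod_eq_of_unbounded
    (hg : ¬ ∃ C : ℝ, 0 ≤ C ∧ ∀ a, ‖g a‖ ≤ C * ‖f a‖) :
    closure (range fun a => (f a, g a)) = closure (range f) ×ˢ univ := by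
  set N := LinearMap.range (f.prod g)
  have hN : (N : Set (V × 𝕜)) = range fun a => (f a, g a) := LinearMap.coe_range _
  set M := N.topologicalClosure
  have hM : (M : Set (V × 𝕜)) = closure (range fun a => (f a, g a)) := by
    rw [Submodule.topologicalClosure_coe, hN]
  have hP : ((0 : V), (1 : 𝕜)) ∈ M := by
    rw [← SetLike.mem_coe, hM]
    exact zero_one_mem_closure_range_prod_of_unbounded f g hg
  have hsub : range f ×ˢ univ ⊆ (M : Set (V × 𝕜)) := by
    rintro ⟨_, z⟩ ⟨⟨a, rfl⟩, -⟩
    have : (f a, z) = (f a, g a) + (z - g a) • ((0 : V), (1 : 𝕜)) := by simp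
    rw [this]
    exact M.add_mem (N.le_topologicalClosure ⟨a, rfl⟩) (M.smul_mem _ hP)
  rw [← closure_univ (X := 𝕜), ← closure_prod_eq, ← hM]
  refine (closure_minimal hsub N.isClosed_topologicalClosure).antisymm' ?_
  rw [Submodule.topologicalClosure_coe, hN]
  exact closure_mono (range_subset_iff.2 fun a => ⟨mem_range_self a, mem_univ _⟩)

end Unbounded

section BlockDiag

variable {𝕜 E : Type*} [NontriviallyNormedField 𝕜] [NormedAddCommGroup E] [NormedSpace 𝕜 E]

/-- The operator `b ⊕ z • 1` on the Hilbert sum `E ⊕ 𝕜`, for `p = (b, z)`. -/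
noncomputable def blockDiag (p : (E →L[𝕜] E) × 𝕜) : WithLp 2 (E × 𝕜) →L[𝕜] WithLp 2 (E × 𝕜) :=
  (WithLp.prodContinuousLinearEquiv 2 𝕜 E 𝕜).symm.conjContinuousAlgEquiv (p.1.prodMap (p.2 • 1))

theorem blockDiag_apply (p : (E →L[𝕜] E) × 𝕜) (v : WithLp 2 (E × 𝕜)) :
    blockDiag p v = WithLp.toLp 2 (p.1 v.fst, p.2 • v.snd) := rfl

theorem eq_blockDiag_iff {T : WithLp 2 (E × 𝕜) →L[𝕜] WithLp 2 (E × 𝕜)} {b : E →L[𝕜] E} {z : 𝕜} :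
    T = blockDiag (b, z) ↔ ∀ v, WithLp.equiv 2 (E × 𝕜) (T v)
      = (b (WithLp.equiv 2 (E × 𝕜) v).1, z • (WithLp.equiv 2 (E × 𝕜) v).2) := by
  rw [ContinuousLinearMap.ext_iff]
  exact forall_congr' fun v => (WithLp.equiv 2 (E × 𝕜)).apply_eq_iff_eq.symm

theorem continuous_blockDiag : Continuous (blockDiag : (E →L[𝕜] E) × 𝕜 → _) :=
  (map_continuous _).comp <| (ContinuousLinearMap.prodMapL 𝕜 E E 𝕜 𝕜).continuous.comp <|
    continuous_fst.prodMk (continuous_snd.smul continuous_const)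

theorem isClosedEmbedding_blockDiag : IsClosedEmbedding (blockDiag : (E →L[𝕜] E) × 𝕜 → _) := by
  let e := WithLp.prodContinuousLinearEquiv 2 𝕜 E 𝕜
  refine Function.LeftInverse.isClosedEmbedding
    (f := fun T => (.fst 𝕜 E 𝕜 ∘L e.conjContinuousAlgEquiv T ∘L .inl 𝕜 E 𝕜,
      (e.conjContinuousAlgEquiv T (0, 1)).2)) (fun p => ?_) ?_ continuous_blockDiag
  · ext <;> simp [e, blockDiag_apply]
  · have := map_continuous e.conjContinuousAlgEquiv
    fun_prop

end BlockDiag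

theorem stmt_10_general {A : Type*} [Ring A] [StarRing A] [Algebra ℂ A]
    {H : Type*} [NormedAddCommGroup H] [InnerProductSpace ℂ H] [CompleteSpace H]
    (π : A →⋆ₐ[ℂ] (H →L[ℂ] H)) (ε : A →⋆ₐ[ℂ] ℂ)
    (hε : ¬ ∃ C : ℝ, 0 ≤ C ∧ ∀ a : A, ‖ε a‖ ≤ C * ‖π a‖)
    (πt : A → (WithLp 2 (H × ℂ) →L[ℂ] WithLp 2 (H × ℂ)))
    (hπt : ∀ (a : A) (v : WithLp 2 (H × ℂ)),
      WithLp.equiv 2 (H × ℂ) (πt a v)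
        = (π a (WithLp.equiv 2 (H × ℂ) v).1, ε a • (WithLp.equiv 2 (H × ℂ) v).2))
    (P : WithLp 2 (H × ℂ) →L[ℂ] WithLp 2 (H × ℂ))
    (hP : ∀ v : WithLp 2 (H × ℂ),
      WithLp.equiv 2 (H × ℂ) (P v) = (0, (WithLp.equiv 2 (H × ℂ) v).2)) :
    P ∈ closure (Set.range πt) ∧
    closure (Set.range πt)
      = { T : WithLp 2 (H × ℂ) →L[ℂ] WithLp 2 (H × ℂ) |
          ∃ b ∈ closure (Set.range fun a : A => π a), ∃ z : ℂ,
            ∀ v : WithLp 2 (H × ℂ),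
              WithLp.equiv 2 (H × ℂ) (T v)
                = (b (WithLp.equiv 2 (H × ℂ) v).1, z • (WithLp.equiv 2 (H × ℂ) v).2) } := by
  have hπt_eq : πt = fun a => blockDiag (π a, ε a) :=
    funext fun a => eq_blockDiag_iff.2 (hπt a)
  have hP_eq : P = blockDiag (0, 1) := eq_blockDiag_iff.2 fun v => by simpa using hP v
  have hclosure : closure (range πt) = blockDiag '' (closure (range fun a => π a) ×ˢ univ) := by
    rw [hπt_eq, range_comp' blockDiag, isClosedEmbedding_blockDiag.closure_image_eq]
    exact congrArg _ (closure_range_prod_eq_of_unbounded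
      (π : A →ₐ[ℂ] (H →L[ℂ] H)).toLinearMap (ε : A →ₐ[ℂ] ℂ).toLinearMap hε)
  refine ⟨?_, ?_⟩
  · rw [hclosure, hP_eq]
    exact mem_image_of_mem _ ⟨subset_closure ⟨0, map_zero π⟩, mem_univ _⟩
  · rw [hclosure]
    ext T
    constructor
    · rintro ⟨⟨b, z⟩, ⟨hb, -⟩, rfl⟩
      exact ⟨b, hb, z, eq_blockDiag_iff.1 rfl⟩
    · rintro ⟨b, hb, z, hT⟩
      exact ⟨(b, z), ⟨hb, mem_univ z⟩, (eq_blockDiag_iff.2 hT).symm⟩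

/-- Let `A` be a unital complex *-algebra, `π : A → B(H)` a unital
*-homomorphism and `ε : A → ℂ` a character which is unbounded with respect to the
seminorm `a ↦ ‖π(a)‖`. Let `H̃ = H ⊕ ℂ` and `π̃(a)(ξ, z) = (π(a)ξ, ε(a)z)`. Then (1) the
orthogonal projection `P` of `H̃` onto `{0} ⊕ ℂ` lies in the norm closure of `π̃(A)` in
`B(H̃)`, and (2) the norm closure of `π̃(A)` equals `{ b ⊕ z·1 : b ∈ closure π(A), z ∈ ℂ }`. -/
theorem stmt_10 {A : Type*} [Ring A] [StarRing A] [Algebra ℂ A] [StarModule ℂ A]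
    {H : Type*} [NormedAddCommGroup H] [InnerProductSpace ℂ H] [CompleteSpace H]
    (π : A →⋆ₐ[ℂ] (H →L[ℂ] H)) (ε : A →⋆ₐ[ℂ] ℂ)
    (hε : ¬ ∃ C : ℝ, 0 ≤ C ∧ ∀ a : A, ‖ε a‖ ≤ C * ‖π a‖)
    (πt : A → (WithLp 2 (H × ℂ) →L[ℂ] WithLp 2 (H × ℂ)))
    (hπt : ∀ (a : A) (v : WithLp 2 (H × ℂ)),
      WithLp.equiv 2 (H × ℂ) (πt a v)
        = (π a (WithLp.equiv 2 (H × ℂ) v).1, ε a • (WithLp.equiv 2 (H × ℂ) v).2))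
    (P : WithLp 2 (H × ℂ) →L[ℂ] WithLp 2 (H × ℂ))
    (hP : ∀ v : WithLp 2 (H × ℂ),
      WithLp.equiv 2 (H × ℂ) (P v) = (0, (WithLp.equiv 2 (H × ℂ) v).2)) :
    P ∈ closure (Set.range πt) ∧
    closure (Set.range πt)
      = { T : WithLp 2 (H × ℂ) →L[ℂ] WithLp 2 (H × ℂ) |
          ∃ b ∈ closure (Set.range fun a : A => π a), ∃ z : ℂ,
            ∀ v : WithLp 2 (H × ℂ),
              WithLp.equiv 2 (H × ℂ) (T v)
                = (b (WithLp.equiv 2 (H × ℂ) v).1, z • (WithLp.equiv 2 (H × ℂ) v).2) } :=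
  stmt_10_general π ε hε πt hπt P hP
end
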